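/- arXiv:1603.09009 — 2 statements merged into one kernel-verified Lean document; each statement's English description precedes it below -/
import Mathlib

section
/- Let G be a strongly connected directed graph and G′ its undirected copy (each directed edge made undirected with the same weight). Then for every demand vector b: OPT_b(G′) ≤ OPT_b(G) ≤ (1 + bal(G))·OPT_b(G′). -/
open Finset

variable {V : Type*} [Fintype V] [DecidableEq V]

/-- Total weight of edges from `S` to its complement. -/
def cutWeight (w : V → V → ℝ) (S : Finset V) : ℝ :=
  ∑ u ∈ S, ∑ v ∈ Sᶜ, w u v

/-- `G` is strongly connected. -/
def StronglyConnected (w : V → V → ℝ) : Prop :=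
  ∀ u v : V, Relation.ReflTransGen (fun a b => 0 < w a b) u v

/-- The demand vector `b` can be routed in the directed graph with congestion `c`. -/
def Routes (w : V → V → ℝ) (b : V → ℝ) (c : ℝ) : Prop :=
  ∃ f : V → V → ℝ, (∀ u v, 0 ≤ f u v) ∧ (∀ u v, f u v ≤ c * w u v) ∧
    ∀ x : V, (∑ u, f u x) - (∑ u, f x u) = b x

/-- `OPT_b(G)` for the directed graph `G`. -/
noncomputable def OPT (w : V → V → ℝ) (b : V → ℝ) : ℝ :=
  sInf {c : ℝ | 0 ≤ c ∧ Routes w b c}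

/-- The demand `b` can be routed in the undirected copy `G'` (where each directed edge
is made undirected with the same weight) with congestion `c`: flow may traverse each
edge in either direction. -/
def RoutesUndirCopy (w : V → V → ℝ) (b : V → ℝ) (c : ℝ) : Prop :=
  ∃ g : V → V → ℝ, (∀ u v, g u v = -g v u) ∧
    (∀ u v, |g u v| ≤ c * (w u v + w v u)) ∧
    ∀ x : V, (∑ u, g u x) = b x

/-- `OPT_b(G')` for the undirected copy `G'` of `G`. -/
noncomputable def OPTUndir (w : V → V → ℝ) (b : V → ℝ) : ℝ :=
  sInf {c : ℝ | 0 ≤ c ∧ RoutesUndirCopy w b c}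

/-- The imbalance `bal(G)`. -/
noncomputable def bal (w : V → V → ℝ) : ℝ :=
  sInf {α : ℝ | 0 ≤ α ∧ ∀ S : Finset V, cutWeight w S ≤ α * cutWeight w Sᶜ}

/-!
A directed flow `f` yields the undirected flow `f - fᵀ` with the same congestion. Conversely, an
undirected flow `g` of congestion `c` splits into the part `F` that the arcs can carry in the
direction of `g` and an overflow `R` that only fits on the reverse arcs, so that `R` is a directed
flow of congestion `c` going the wrong way. Cancelling it needs a directed flow whose net inflow is
that of `R` negated; by Gale's feasibility theorem one exists with capacities `α c w` as soon as
`w(S, Sᶜ) ≤ α w(Sᶜ, S)` for every cut, i.e. for `α = bal(G)`, which is attained (and finite by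
strong connectivity). `F` plus this flow routes `b` with congestion `(1 + bal(G)) c`.

Gale's theorem is proved by maximising the served demand `∑ₓ min (netInflow f x) (d x)` over the
compact box of flows within capacity. At a maximiser, a residual path from a vertex with surplus to
one with deficit could be augmented; otherwise the vertices with a residual path to a deficit vertex
span a saturated cut, which violates the cut condition.
-/

open Filter Topology
open scoped Pointwise

theorem Relation.ReflTransGen.exists_boundary_rel {α : Type*} {r : α → α → Prop} {p : α → Prop}
    {a b : α} (h : Relation.ReflTransGen r a b) (ha : p a) (hb : ¬p b) :
    ∃ u v, r u v ∧ p u ∧ ¬p v := by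
  induction h with
  | refl => exact absurd ha hb
  | @tail c d _ hcd ih =>
    by_cases hc : p c
    · exact ⟨c, d, hcd, hc, hb⟩
    · exact ih hc

theorem eventually_add_mul_mem_Icc {a p C : ℝ} (ha : a ∈ Set.Icc 0 C) (hpos : 0 < p → a < C)
    (hneg : p < 0 → 0 < a) : ∀ᶠ ε in 𝓝[>] (0 : ℝ), a + ε * p ∈ Set.Icc 0 C := by
  have hlim : Tendsto (fun ε => a + ε * p) (𝓝[>] 0) (𝓝 a) :=
    ((continuous_const.add (continuous_id.mul continuous_const)).tendsto' 0 a (by simp)).mono_left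
      nhdsWithin_le_nhds
  rcases lt_trichotomy p 0 with hp | rfl | hp
  · filter_upwards [self_mem_nhdsWithin, hlim.eventually (eventually_gt_nhds (hneg hp))]
      with ε (hε : 0 < ε) h
    exact ⟨h.le, by nlinarith [ha.2]⟩
  · simp only [mul_zero, add_zero]
    exact Eventually.of_forall fun _ => ha
  · filter_upwards [self_mem_nhdsWithin, hlim.eventually (eventually_lt_nhds (hpos hp))]
      with ε (hε : 0 < ε) h
    exact ⟨by nlinarith [ha.1], h.le⟩

section

variable {V : Type*} [Fintype V]

def netInflow : (V → V → ℝ) →ₗ[ℝ] V → ℝ where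
  toFun f x := (∑ u, f u x) - ∑ u, f x u
  map_add' f g := by
    ext x
    simp only [Pi.add_apply, sum_add_distrib]
    ring
  map_smul' c f := by
    ext x
    simp only [Pi.smul_apply, smul_eq_mul, ← mul_sum, RingHom.id_apply, mul_sub]

theorem netInflow_apply (f : V → V → ℝ) (x : V) :
    netInflow f x = (∑ u, f u x) - ∑ u, f x u := rfl

theorem sum_netInflow (f : V → V → ℝ) : ∑ x, netInflow f x = 0 := by
  simp only [netInflow_apply, sum_sub_distrib]
  rw [sum_comm, sub_self]

def Residual (cap f : V → V → ℝ) (u v : V) : Prop :=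
  f u v < cap u v ∨ 0 < f v u

def servedDemand (d : V → ℝ) (f : V → V → ℝ) : ℝ :=
  ∑ x, min (netInflow f x) (d x)

theorem continuous_servedDemand (d : V → ℝ) : Continuous (servedDemand d) :=
  continuous_finsetSum _ fun x _ =>
    ((continuous_apply x).comp (LinearMap.continuous_of_finiteDimensional netInflow)).min
      continuous_const

theorem eventually_add_smul_mem_Icc {cap f φ : V → V → ℝ} (hf : f ∈ Set.Icc 0 cap)
    (hpos : ∀ u v, 0 < φ u v → f u v < cap u v) (hneg : ∀ u v, φ u v < 0 → 0 < f u v) :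
    ∀ᶠ ε in 𝓝[>] (0 : ℝ), f + ε • φ ∈ Set.Icc 0 cap := by
  have h u v : ∀ᶠ ε in 𝓝[>] (0 : ℝ), f u v + ε * φ u v ∈ Set.Icc 0 (cap u v) :=
    eventually_add_mul_mem_Icc ⟨hf.1 u v, hf.2 u v⟩ (hpos u v) (hneg u v)
  filter_upwards [eventually_all.2 fun u => eventually_all.2 (h u)] with ε hε
  exact ⟨fun u v => (hε u v).1, fun u v => (hε u v).2⟩

theorem routesUndirCopy_of_routes {w : V → V → ℝ} (hw : ∀ u v, 0 ≤ w u v) {b : V → ℝ} {c : ℝ}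
    (hc : 0 ≤ c) (h : Routes w b c) : RoutesUndirCopy w b c := by
  obtain ⟨f, hf0, hfc, hf⟩ := h
  have hbound u v : f u v - f v u ≤ c * (w u v + w v u) := by
    nlinarith [hf0 v u, hfc u v, mul_nonneg hc (hw v u)]
  refine ⟨fun u v => f u v - f v u, fun u v => by ring, fun u v => abs_le.2 ⟨?_, hbound u v⟩,
    fun x => by simpa only [sum_sub_distrib] using hf x⟩
  linarith [hbound v u, add_comm (w u v) (w v u)]

end

def arcFlow (p q : V) : V → V → ℝ := fun u v => if u = p ∧ v = q then 1 else 0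

theorem netInflow_arcFlow (p q : V) :
    netInflow (arcFlow p q) = Pi.single q 1 - Pi.single p 1 := by
  ext z
  simp only [netInflow_apply, arcFlow, ite_and, sum_ite_eq', mem_univ, if_true, Pi.sub_apply,
    Pi.single_apply]
  split_ifs <;> simp_all

theorem exists_direction_of_reflTransGen_residual {cap f : V → V → ℝ} {x y : V}
    (h : Relation.ReflTransGen (Residual cap f) x y) :
    ∃ φ : V → V → ℝ, (∀ u v, 0 < φ u v → f u v < cap u v) ∧ (∀ u v, φ u v < 0 → 0 < f u v) ∧
      netInflow φ = Pi.single y 1 - Pi.single x 1 := by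
  induction h with
  | refl => exact ⟨0, by simp, by simp, by simp⟩
  | @tail p q _ hpq ih =>
    obtain ⟨φ, hpos, hneg, hφ⟩ := ih
    rcases hpq with hfwd | hbwd
    · refine ⟨φ + arcFlow p q, fun u v huv => ?_, fun u v huv => ?_, ?_⟩
      · by_cases h : u = p ∧ v = q
        · obtain ⟨rfl, rfl⟩ := h
          exact hfwd
        · simp only [Pi.add_apply, arcFlow, h, if_false, add_zero] at huv
          exact hpos u v huv
      · by_cases h : u = p ∧ v = q
        · obtain ⟨rfl, rfl⟩ := h
          simp only [Pi.add_apply, arcFlow, and_self, if_true] at huv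
          exact hneg u v (by linarith)
        · simp only [Pi.add_apply, arcFlow, h, if_false, add_zero] at huv
          exact hneg u v huv
      · rw [map_add, hφ, netInflow_arcFlow]
        abel
    · refine ⟨φ - arcFlow q p, fun u v huv => ?_, fun u v huv => ?_, ?_⟩
      · by_cases h : u = q ∧ v = p
        · obtain ⟨rfl, rfl⟩ := h
          simp only [Pi.sub_apply, arcFlow, and_self, if_true] at huv
          exact hpos u v (by linarith)
        · simp only [Pi.sub_apply, arcFlow, h, if_false, sub_zero] at huv
          exact hpos u v huv
      · by_cases h : u = q ∧ v = p
        · obtain ⟨rfl, rfl⟩ := h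
          exact hbwd
        · simp only [Pi.sub_apply, arcFlow, h, if_false, sub_zero] at huv
          exact hneg u v huv
      · rw [map_sub, hφ, netInflow_arcFlow]
        abel

theorem exists_augmentation {cap f : V → V → ℝ} (hf : f ∈ Set.Icc 0 cap) {x y : V}
    (h : Relation.ReflTransGen (Residual cap f) x y) :
    ∀ᶠ ε in 𝓝[>] (0 : ℝ), ∃ f' ∈ Set.Icc 0 cap,
      netInflow f' = netInflow f + ε • (Pi.single y 1 - Pi.single x 1) := by
  obtain ⟨φ, hpos, hneg, hφ⟩ := exists_direction_of_reflTransGen_residual h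
  filter_upwards [eventually_add_smul_mem_Icc hf hpos hneg] with ε hε
  exact ⟨f + ε • φ, hε, by rw [map_add, map_smul, hφ]⟩

theorem cutWeight_mono {f g : V → V → ℝ} (h : f ≤ g) (S : Finset V) :
    cutWeight f S ≤ cutWeight g S :=
  sum_le_sum fun u _ => sum_le_sum fun v _ => h u v

theorem cutWeight_nonneg {f : V → V → ℝ} (h : 0 ≤ f) (S : Finset V) : 0 ≤ cutWeight f S :=
  sum_nonneg fun u _ => sum_nonneg fun v _ => h u v

theorem cutWeight_smul (c : ℝ) (f : V → V → ℝ) (S : Finset V) :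
    cutWeight (c • f) S = c * cutWeight f S := by
  simp only [cutWeight, Pi.smul_apply, smul_eq_mul, mul_sum]

theorem sum_netInflow_eq_cutWeight (f : V → V → ℝ) (S : Finset V) :
    ∑ x ∈ S, netInflow f x = cutWeight f Sᶜ - cutWeight f S := by
  have split (g : V → ℝ) : ∑ u, g u = ∑ u ∈ S, g u + ∑ u ∈ Sᶜ, g u :=
    (sum_add_sum_compl S g).symm
  simp only [netInflow_apply, cutWeight, compl_compl, split, sum_sub_distrib, sum_add_distrib]
  rw [sum_comm (s := Sᶜ), sum_comm (s := S) (t := S) (f := fun u x => f u x)]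
  ring

theorem sum_netInflow_eq_of_not_residual {cap f : V → V → ℝ} (hf : f ∈ Set.Icc 0 cap)
    {S : Finset V} (hS : ∀ u ∉ S, ∀ v ∈ S, ¬Residual cap f u v) :
    ∑ x ∈ S, netInflow f x = cutWeight cap Sᶜ := by
  have hsat : cutWeight f Sᶜ = cutWeight cap Sᶜ := by
    refine sum_congr rfl fun u hu => sum_congr rfl fun v hv => ?_
    rw [compl_compl] at hv
    exact le_antisymm (hf.2 u v) (not_lt.1 (not_or.1 (hS u (mem_compl.1 hu) v hv)).1)
  have hempty : cutWeight f S = 0 := by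
    refine sum_eq_zero fun v hv => sum_eq_zero fun u hu => ?_
    exact le_antisymm (not_lt.1 (not_or.1 (hS u (mem_compl.1 hu) v hv)).2) (hf.1 v u)
  rw [sum_netInflow_eq_cutWeight, hsat, hempty, sub_zero]

theorem exists_servedDemand_gt {cap f : V → V → ℝ} (hf : f ∈ Set.Icc 0 cap) {d : V → ℝ}
    {s t : V} (hs : netInflow f s < d s) (ht : d t < netInflow f t)
    (hts : Relation.ReflTransGen (Residual cap f) t s) :
    ∃ f' ∈ Set.Icc 0 cap, servedDemand d f < servedDemand d f' := by
  obtain ⟨ε, ⟨f', hf', hnet⟩, hε⟩ := ((exists_augmentation hf hts).and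
    (Ioo_mem_nhdsGT (sub_pos.2 ht))).exists
  have hst : s ≠ t := by
    rintro rfl
    linarith
  have hnet_s : netInflow f' s = netInflow f s + ε := by simp [hnet, hst]
  refine ⟨f', hf', sum_lt_sum (fun x _ => ?_) ⟨s, mem_univ s, ?_⟩⟩
  · rcases eq_or_ne x s with rfl | hxs
    · rw [hnet_s]
      exact min_le_min_right _ (by linarith [hε.1])
    rcases eq_or_ne x t with rfl | hxt
    · have : netInflow f' x = netInflow f x - ε := by simp [hnet, hxs, sub_eq_add_neg]
      rw [this, min_eq_right (a := netInflow f x - ε) (by linarith [hε.2])]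
      exact min_le_right _ _
    · simp [hnet, hxs, hxt]
  · rw [hnet_s, min_eq_left hs.le]
    exact lt_min (by linarith [hε.1]) hs

theorem le_netInflow_of_isMaxOn {cap f : V → V → ℝ} {d : V → ℝ}
    (hcut : ∀ S, ∑ x ∈ S, d x ≤ cutWeight cap Sᶜ) (hf : f ∈ Set.Icc 0 cap)
    (hmax : IsMaxOn (servedDemand d) (Set.Icc 0 cap) f) (s : V) : d s ≤ netInflow f s := by
  classical
  by_contra! hs
  let S := univ.filter fun x => Relation.ReflTransGen (Residual cap f) x s
  have hS : ∀ u ∉ S, ∀ v ∈ S, ¬Residual cap f u v := fun u hu v hv huv =>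
    hu (mem_filter.2 ⟨mem_univ u, (mem_filter.1 hv).2.head huv⟩)
  by_cases hsurplus : ∃ t ∈ S, d t < netInflow f t
  · obtain ⟨t, htS, ht⟩ := hsurplus
    obtain ⟨f', hf', hlt⟩ := exists_servedDemand_gt hf hs ht (mem_filter.1 htS).2
    exact hlt.not_ge (hmax hf')
  · push Not at hsurplus
    have hsS : s ∈ S := mem_filter.2 ⟨mem_univ s, .refl⟩
    have := sum_lt_sum hsurplus ⟨s, hsS, hs⟩
    linarith [hcut S, sum_netInflow_eq_of_not_residual hf hS]

theorem exists_flow_of_cut_condition {cap : V → V → ℝ} (hcap : 0 ≤ cap) {d : V → ℝ}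
    (hd : ∑ x, d x = 0) (hcut : ∀ S, ∑ x ∈ S, d x ≤ cutWeight cap Sᶜ) :
    ∃ f ∈ Set.Icc 0 cap, netInflow f = d := by
  obtain ⟨f, hf, hmax⟩ := isCompact_Icc.exists_isMaxOn (Set.nonempty_Icc.2 hcap)
    (continuous_servedDemand d).continuousOn
  have hle := le_netInflow_of_isMaxOn hcut hf hmax
  have heq := (sum_eq_sum_iff_of_le fun x _ => hle x).1 (by rw [hd, sum_netInflow])
  exact ⟨f, hf, funext fun x => (heq x (mem_univ x)).symm⟩

theorem exists_reverse_flow {cap cap' R : V → V → ℝ} (hcap' : 0 ≤ cap')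
    (hbal : ∀ S, cutWeight cap S ≤ cutWeight cap' Sᶜ) (hR : R ∈ Set.Icc 0 cap) :
    ∃ h ∈ Set.Icc 0 cap', netInflow h = -netInflow R := by
  refine exists_flow_of_cut_condition hcap' (by simp [sum_netInflow]) fun S => ?_
  calc ∑ x ∈ S, -netInflow R x = cutWeight R S - cutWeight R Sᶜ := by
        rw [sum_neg_distrib, sum_netInflow_eq_cutWeight, neg_sub]
    _ ≤ cutWeight cap S := by linarith [cutWeight_nonneg hR.1 Sᶜ, cutWeight_mono hR.2 S]
    _ ≤ cutWeight cap' Sᶜ := hbal S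

theorem routes_of_routesUndirCopy {w : V → V → ℝ} (hw : ∀ u v, 0 ≤ w u v) {α c : ℝ}
    (hα : 0 ≤ α) (hbal : ∀ S, cutWeight w S ≤ α * cutWeight w Sᶜ) (hc : 0 ≤ c) {b : V → ℝ}
    (h : RoutesUndirCopy w b c) : Routes w b ((1 + α) * c) := by
  obtain ⟨g, hanti, hcap, hg⟩ := h
  -- `F` is what the arc `u → v` carries of `g u v > 0`; the overflow `R v u` goes on `v → u`.
  let F : V → V → ℝ := fun u v => min (max (g u v) 0) (c * w u v)
  let R : V → V → ℝ := fun u v => max (g v u - c * w v u) 0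
  have hF : F ∈ Set.Icc 0 (c • w) :=
    ⟨fun u v => le_min (le_max_right _ _) (mul_nonneg hc (hw u v)), fun u v => min_le_right _ _⟩
  have hR : R ∈ Set.Icc 0 (c • w) := by
    refine ⟨fun u v => le_max_right _ _, fun u v => max_le ?_ (mul_nonneg hc (hw u v))⟩
    simp only [Pi.smul_apply, smul_eq_mul]
    linarith [(abs_le.1 (hcap v u)).2, mul_add c (w v u) (w u v)]
  have hdecomp u v : g u v = F u v - F v u + R v u - R u v := by
    have hA := mul_nonneg hc (hw u v)
    have hB := mul_nonneg hc (hw v u)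
    simp only [F, R, hanti v u]
    rcases le_total (g u v) 0 with h | h <;> simp only [max_def, min_def] <;> split_ifs <;> linarith
  have hb : b = netInflow F - netInflow R := by
    ext x
    simp only [← hg x, hdecomp _ x, Pi.sub_apply, netInflow_apply, sum_add_distrib, sum_sub_distrib]
    ring
  have hbal' S : cutWeight (c • w) S ≤ cutWeight ((α * c) • w) Sᶜ := by
    rw [cutWeight_smul, cutWeight_smul, mul_comm α, mul_assoc]
    exact mul_le_mul_of_nonneg_left (hbal S) hc
  obtain ⟨h, hh, hhR⟩ := exists_reverse_flow (fun u v => mul_nonneg (mul_nonneg hα hc) (hw u v))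
    hbal' hR
  refine ⟨F + h, fun u v => add_nonneg (hF.1 u v) (hh.1 u v), fun u v => ?_, fun x => ?_⟩
  · have := add_le_add (hF.2 u v) (hh.2 u v)
    simp only [Pi.add_apply, Pi.smul_apply, smul_eq_mul] at this ⊢
    linarith
  · rw [← netInflow_apply, map_add, hhR, hb]
    simp only [Pi.add_apply, Pi.sub_apply, Pi.neg_apply]
    ring

theorem StronglyConnected.cutWeight_pos {w : V → V → ℝ} (hw : ∀ u v, 0 ≤ w u v)
    (hsc : StronglyConnected w) {S : Finset V} (hS : S.Nonempty) (hSc : Sᶜ.Nonempty) :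
    0 < cutWeight w S := by
  obtain ⟨x, hx⟩ := hS
  obtain ⟨y, hy⟩ := hSc
  obtain ⟨u, v, huv, hu, hv⟩ :=
    (hsc x y).exists_boundary_rel (p := (· ∈ S)) hx (mem_compl.1 hy)
  exact sum_pos' (fun u _ => sum_nonneg fun v _ => hw u v)
    ⟨u, hu, sum_pos' (fun v _ => hw u v) ⟨v, mem_compl.2 hv, huv⟩⟩

theorem StronglyConnected.exists_cutWeight_le_mul_compl {w : V → V → ℝ}
    (hw : ∀ u v, 0 ≤ w u v) (hsc : StronglyConnected w) :
    ∃ α, 0 ≤ α ∧ ∀ S, cutWeight w S ≤ α * cutWeight w Sᶜ := by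
  have h (S : Finset V) : ∀ᶠ α in atTop, cutWeight w S ≤ α * cutWeight w Sᶜ := by
    rcases S.eq_empty_or_nonempty with rfl | hS
    · simp [cutWeight]
    rcases Sᶜ.eq_empty_or_nonempty with hSc | hSc
    · rw [compl_eq_empty_iff] at hSc
      simp [hSc, cutWeight]
    have hpos := hsc.cutWeight_pos hw hSc (by rwa [compl_compl])
    filter_upwards [eventually_ge_atTop (cutWeight w S / cutWeight w Sᶜ)] with α hα
    exact (div_le_iff₀ hpos).1 hα
  exact ((eventually_ge_atTop 0).and (eventually_all.2 h)).exists

theorem bal_mem {w : V → V → ℝ} (hw : ∀ u v, 0 ≤ w u v) (hsc : StronglyConnected w) :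
    0 ≤ bal w ∧ ∀ S, cutWeight w S ≤ bal w * cutWeight w Sᶜ := by
  have hclosed : IsClosed {α : ℝ | 0 ≤ α ∧ ∀ S, cutWeight w S ≤ α * cutWeight w Sᶜ} := by
    simp only [Set.ofPred_and, Set.ofPred_forall]
    exact isClosed_Ici.inter
      (isClosed_iInter fun S => isClosed_le continuous_const (continuous_id.mul continuous_const))
  exact hclosed.csInf_mem (hsc.exists_cutWeight_le_mul_compl hw) ⟨0, fun _ h => h.1⟩

theorem stmt7_general (w : V → V → ℝ) (hw : ∀ u v, 0 ≤ w u v) (hsc : StronglyConnected w)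
    (b : V → ℝ) :
    OPTUndir w b ≤ OPT w b ∧ OPT w b ≤ (1 + bal w) * OPTUndir w b := by
  set D := {c : ℝ | 0 ≤ c ∧ Routes w b c}
  set U := {c : ℝ | 0 ≤ c ∧ RoutesUndirCopy w b c}
  change sInf U ≤ sInf D ∧ sInf D ≤ (1 + bal w) * sInf U
  obtain ⟨hbal0, hbal⟩ := bal_mem hw hsc
  have hDU : D ⊆ U := fun c hc => ⟨hc.1, routesUndirCopy_of_routes hw hc.1 hc.2⟩
  have hUD : (1 + bal w) • U ⊆ D := Set.smul_set_subset_iff.2 fun c hc =>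
    ⟨mul_nonneg (by linarith) hc.1, routes_of_routesUndirCopy hw hbal0 hbal hc.1 hc.2⟩
  rcases U.eq_empty_or_nonempty with hU | hU
  · -- nothing routes `b`, and both sides are the junk value `sInf ∅ = 0`
    simp [hU, Set.subset_eq_empty hDU hU]
  refine ⟨csInf_le_csInf ⟨0, fun _ h => h.1⟩ (hU.smul_set.mono hUD) hDU, ?_⟩
  calc sInf D ≤ sInf ((1 + bal w) • U) := csInf_le_csInf ⟨0, fun _ h => h.1⟩ hU.smul_set hUD
    _ = (1 + bal w) * sInf U := Real.sInf_smul_of_nonneg (by linarith) U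

/-- Let `G` be a strongly connected directed graph and `G'` its undirected copy.
Then for every demand vector `b`:
`OPT_b(G′) ≤ OPT_b(G) ≤ (1 + bal(G)) · OPT_b(G′)`. -/
theorem stmt7 (w : V → V → ℝ) (hw : ∀ u v, 0 ≤ w u v) (hsc : StronglyConnected w)
    (b : V → ℝ) (hb : (∑ v, b v) = 0) :
    OPTUndir w b ≤ OPT w b ∧ OPT w b ≤ (1 + bal w) * OPTUndir w b :=
  stmt7_general w hw hsc b
end

section
/- (Non-Euclidean composite gradient descent, convergence) Under the setup of the progress lemma, if additionally f is finite only on a region of diameter D in ‖·‖, then for all k ≥ 1: ε_k ≤ max( 2LD² / (⌊(k−1)/2⌋ + 4), (1/2)^{⌊(k−1)/2⌋} ε₀ ), where ε_k = f(x_k) − min_x f(x). -/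
/-!
Convexity together with the quadratic upper bound forces `Dg q` to be a subgradient of `g` at
`q`, so one composite step gives `f (x (k+1)) ≤ f p + (L/2) N(p - x k)²` for every `p`. Taking
`p = τ x* + (1 - τ) x k` and using the diameter bound gives the recurrence
`ε (k+1) ≤ (1 - τ) ε k + (L D² / 2) τ²` for all `τ ∈ [0, 1]`. With `C = 2 L D²`, the choice
`τ = 1` halves the gap as long as `2 ε ≥ C`; once `2 ε ≤ C`, the choice `τ = 2 / (t + 1)`
improves `ε ≤ C / t` to `ε ≤ C / (t + 1)`. Splitting the first `K` steps at about `K / 2`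
yields the bound.
-/

open Set Filter Topology

theorem ConvexOn.add_le_of_le_add_sq {φ : ℝ → ℝ} (hφ : ConvexOn ℝ univ φ) {a b : ℝ}
    (h : ∀ t, 0 < t → φ (-t) ≤ φ 0 - a * t + b * t ^ 2) : φ 0 + a ≤ φ 1 := by
  have hslope : ∀ t, 0 < t → a - b * t ≤ φ 1 - φ 0 := fun t ht => by
    have hmono := hφ.slope_mono_adjacent (mem_univ (-t)) (mem_univ 1) (neg_lt_zero.2 ht) one_pos
    rw [sub_neg_eq_add, zero_add, sub_zero, div_one, div_le_iff₀ ht] at hmono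
    nlinarith [h t ht]
  have hlim : Tendsto (fun t => a - b * t) (𝓝[>] 0) (𝓝 a) :=
    ((by fun_prop : Continuous fun t => a - b * t).tendsto' 0 a (by simp)).mono_left
      nhdsWithin_le_nhds
  linarith [le_of_tendsto hlim (eventually_nhdsWithin_of_forall hslope)]

section Descent

variable {E : Type*} [AddCommGroup E] [Module ℝ E]

theorem ConvexOn.add_le_of_le_add_seminorm_sq {g : E → ℝ} (hg : ConvexOn ℝ univ g)
    (ℓ : E →ₗ[ℝ] ℝ) (N : Seminorm ℝ E) (c : ℝ) {q : E}
    (hup : ∀ p, g p ≤ g q + ℓ (p - q) + c * N (p - q) ^ 2) (p : E) :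
    g q + ℓ (p - q) ≤ g p := by
  have hφ : ConvexOn ℝ univ (g ∘ AffineMap.lineMap (k := ℝ) q p) := by
    simpa using hg.comp_affineMap (AffineMap.lineMap (k := ℝ) q p)
  have h := hφ.add_le_of_le_add_sq (a := ℓ (p - q)) (b := c * N (p - q) ^ 2) fun t ht => by
    have hline : AffineMap.lineMap (k := ℝ) q p (-t) - q = (-t) • (p - q) :=
      AffineMap.lineMap_vsub_left q p (-t)
    have := hup (AffineMap.lineMap (k := ℝ) q p (-t))
    rw [hline, map_smul, map_smul_eq_mul, Real.norm_eq_abs, abs_neg, abs_of_pos ht] at this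
    simp only [Function.comp_apply, AffineMap.lineMap_apply_zero, smul_eq_mul] at this ⊢
    linarith
  simpa using h

theorem composite_step_le {g : E → ℝ} (hg : ConvexOn ℝ univ g) (ℓ : E →ₗ[ℝ] ℝ)
    (N : Seminorm ℝ E) (c : ℝ) {ψ f : E → EReal} (hf : ∀ p, f p = (g p : EReal) + ψ p)
    {q q' : E} (hup : ∀ p, g p ≤ g q + ℓ (p - q) + c * N (p - q) ^ 2)
    (hq' : ∀ p, ((ℓ q' + c * N (q' - q) ^ 2 : ℝ) : EReal) + ψ q' ≤
      ((ℓ p + c * N (p - q) ^ 2 : ℝ) : EReal) + ψ p) (p : E) :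
    f q' ≤ f p + ((c * N (p - q) ^ 2 : ℝ) : EReal) := by
  have hupper : g q' ≤ (g q - ℓ q) + (ℓ q' + c * N (q' - q) ^ 2) := by
    linarith [hup q', map_sub ℓ q' q]
  have hlower : (g q - ℓ q) + (ℓ p + c * N (p - q) ^ 2) ≤ g p + c * N (p - q) ^ 2 := by
    linarith [hg.add_le_of_le_add_seminorm_sq ℓ N c hup p, map_sub ℓ p q]
  calc f q'
        ≤ ((g q - ℓ q : ℝ) : EReal) + (((ℓ q' + c * N (q' - q) ^ 2 : ℝ) : EReal) + ψ q') := by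
        rw [hf, ← add_assoc, ← EReal.coe_add]
        gcongr
    _ ≤ ((g q - ℓ q : ℝ) : EReal) + (((ℓ p + c * N (p - q) ^ 2 : ℝ) : EReal) + ψ p) :=
        add_le_add_right (hq' p) _
    _ ≤ f p + ((c * N (p - q) ^ 2 : ℝ) : EReal) := by
        rw [hf, ← add_assoc, ← EReal.coe_add, add_right_comm, ← EReal.coe_add]
        gcongr

theorem le_convex_combination_add_of_step {f : E → EReal} (N : Seminorm ℝ E) {c D : ℝ}
    (hc : 0 ≤ c)
    (hf : ∀ p q, ∀ τ : ℝ, 0 ≤ τ → τ ≤ 1 →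
      f (τ • p + (1 - τ) • q) ≤ ((τ : EReal) * f p + ((1 - τ : ℝ) : EReal) * f q))
    {q q' xstar : E} {a b : ℝ} (hq : f q = a) (hxstar : f xstar = b) (hD : N (xstar - q) ≤ D)
    (hstep : ∀ p, f q' ≤ f p + ((c * N (p - q) ^ 2 : ℝ) : EReal)) {τ : ℝ} (hτ0 : 0 ≤ τ)
    (hτ1 : τ ≤ 1) :
    f q' ≤ ((τ * b + (1 - τ) * a + c * D ^ 2 * τ ^ 2 : ℝ) : EReal) := by
  set p := τ • xstar + (1 - τ) • q
  have hdist : N (p - q) = τ * N (xstar - q) := by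
    rw [show p - q = τ • (xstar - q) by module, map_smul_eq_mul, Real.norm_of_nonneg hτ0]
  have hsq : c * N (p - q) ^ 2 ≤ c * D ^ 2 * τ ^ 2 := by
    have := apply_nonneg N (xstar - q)
    rw [hdist, mul_pow, mul_comm (τ ^ 2), ← mul_assoc]
    gcongr
  calc f q' ≤ f p + ((c * N (p - q) ^ 2 : ℝ) : EReal) := hstep p
    _ ≤ ((τ * b + (1 - τ) * a : ℝ) : EReal) + ((c * D ^ 2 * τ ^ 2 : ℝ) : EReal) := by
        gcongr
        simpa [hq, hxstar] using hf xstar q τ hτ0 hτ1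
    _ = ((τ * b + (1 - τ) * a + c * D ^ 2 * τ ^ 2 : ℝ) : EReal) := by norm_cast

end Descent

def GapRecurrence (C : ℝ) (e : ℕ → ℝ) : Prop :=
  ∀ k τ, 0 ≤ τ → τ ≤ 1 → e (k + 1) ≤ (1 - τ) * e k + C / 4 * τ ^ 2

namespace GapRecurrence

variable {C : ℝ} {e : ℕ → ℝ}

theorem antitone (h : GapRecurrence C e) : Antitone e :=
  antitone_nat_of_succ_le fun k => by simpa using h k 0 le_rfl zero_le_one

theorem le_geometric (h : GapRecurrence C e) {J : ℕ} (hlarge : ∀ j < J, C ≤ 2 * e j) :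
    e J ≤ (1 / 2) ^ J * e 0 := by
  induction J with
  | zero => simp
  | succ J ih =>
    have hhalf : e (J + 1) ≤ e J / 2 := by
      linarith [h J 1 zero_le_one le_rfl, hlarge J J.lt_succ_self]
    calc e (J + 1) ≤ e J / 2 := hhalf
      _ ≤ (1 / 2) ^ J * e 0 / 2 := by gcongr; exact ih fun j hj => hlarge j (by omega)
      _ = (1 / 2) ^ (J + 1) * e 0 := by ring

theorem succ_mul_le (h : GapRecurrence C e) {k : ℕ} {t : ℝ} (hek : 0 ≤ e k) (ht : 1 ≤ t)
    (hk : e k * t ≤ C) : e (k + 1) * (t + 1) ≤ C := by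
  have ht1 : 0 < t + 1 := by linarith
  have hτ := h k (2 / (t + 1)) (by positivity) (by rw [div_le_one ht1]; linarith)
  have hexpand : ((1 - 2 / (t + 1)) * e k + C / 4 * (2 / (t + 1)) ^ 2) * (t + 1)
      = (t - 1) * e k + C / (t + 1) := by
    field_simp
    ring
  have hC : C / (t + 1) ≤ C - (t - 1) * e k := by
    rw [div_le_iff₀ ht1]
    nlinarith
  calc e (k + 1) * (t + 1)
      ≤ ((1 - 2 / (t + 1)) * e k + C / 4 * (2 / (t + 1)) ^ 2) * (t + 1) := by gcongr
    _ ≤ C := by linarith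

theorem add_mul_le (h : GapRecurrence C e) (he : ∀ k, 0 ≤ e k) {j : ℕ} (hj : e j * 2 ≤ C)
    (i : ℕ) : e (j + i) * (i + 2) ≤ C := by
  induction i with
  | zero => simpa using hj
  | succ i ih =>
    have := h.succ_mul_le (he _) (by linarith [i.cast_nonneg' (α := ℝ)] : (1 : ℝ) ≤ i + 2) ih
    rw [← add_assoc]
    push_cast
    linarith

theorem le_max (h : GapRecurrence C e) (he : ∀ k, 0 ≤ e k) {K : ℕ} (hK : 1 ≤ K) :
    e K ≤ max (C / ((((K - 1) / 2 : ℕ) : ℝ) + 4)) ((1 / 2) ^ ((K - 1) / 2) * e 0) := by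
  set n := (K - 1) / 2
  by_cases hsmall : ∃ j < K - n - 1, e j * 2 ≤ C
  · obtain ⟨j, hj, hej⟩ := hsmall
    have hbound := h.add_mul_le he hej (K - j)
    rw [Nat.add_sub_cancel' (by omega)] at hbound
    have hKj : (n : ℝ) + 2 ≤ (K - j : ℕ) := by exact_mod_cast (by omega : n + 2 ≤ K - j)
    refine le_max_of_le_left ?_
    rw [le_div_iff₀ (by positivity)]
    nlinarith [he K]
  · push Not at hsmall
    refine le_max_of_le_right ?_
    calc e K ≤ e (K - n - 1) := h.antitone (by omega)
      _ ≤ (1 / 2) ^ (K - n - 1) * e 0 := h.le_geometric fun j hj => by linarith [hsmall j hj]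
      _ ≤ (1 / 2) ^ n * e 0 :=
          mul_le_mul_of_nonneg_right (pow_le_pow_of_le_one (by norm_num) (by norm_num) (by omega))
            (he 0)

end GapRecurrence

theorem stmt14_general {m : ℕ} (N : Seminorm ℝ (Fin m → ℝ))
    (L : ℝ) (hL : 0 < L) (D : ℝ)
    (g : (Fin m → ℝ) → ℝ) (Dg : (Fin m → ℝ) → (Fin m → ℝ))
    (ψ : (Fin m → ℝ) → EReal)
    (f : (Fin m → ℝ) → EReal) (hfdef : ∀ p, f p = (g p : EReal) + ψ p)
    (hg_convex : ConvexOn ℝ Set.univ g)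
    (hsmooth : ∀ p q, g p ≤ g q + (∑ i, Dg q i * (p i - q i)) + L / 2 * (N (p - q)) ^ 2)
    (hf_convex : ∀ p q, ∀ τ : ℝ, 0 ≤ τ → τ ≤ 1 →
      f (τ • p + (1 - τ) • q) ≤ ((τ : EReal) * f p + ((1 - τ : ℝ) : EReal) * f q))
    (hdiam : ∀ p q, f p ≠ ⊤ → f q ≠ ⊤ → N (p - q) ≤ D)
    (x : ℕ → Fin m → ℝ)
    (hmin : ∀ (K : ℕ) (p : Fin m → ℝ),
      (((∑ i, Dg (x K) i * x (K + 1) i) + L / 2 * (N (x (K + 1) - x K)) ^ 2 : ℝ) : EReal)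
          + ψ (x (K + 1)) ≤
      (((∑ i, Dg (x K) i * p i) + L / 2 * (N (p - x K)) ^ 2 : ℝ) : EReal) + ψ p)
    (xstar : Fin m → ℝ) (hstar : ∀ p, f xstar ≤ f p)
    (fstar : ℝ) (hfstar : f xstar = (fstar : EReal)) :
    ∀ K : ℕ, 1 ≤ K →
      f (x K) - (fstar : EReal) ≤
        max ((2 * L * D ^ 2 / ((((K - 1) / 2 : ℕ) : ℝ) + 4) : ℝ) : EReal)
          ((((1 / 2 : ℝ) ^ ((K - 1) / 2 : ℕ) : ℝ) : EReal) * (f (x 0) - (fstar : EReal))) := by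
  intro K hK
  by_cases h0 : f (x 0) = ⊤
  · rw [h0, EReal.top_sub_coe, EReal.coe_mul_top_of_pos (by positivity)]
    exact le_top.trans (le_max_right _ _)
  have hstep : ∀ k p, f (x (k + 1)) ≤ f p + ((L / 2 * N (p - x k) ^ 2 : ℝ) : EReal) := fun k =>
    composite_step_le hg_convex (dotProductBilin ℝ ℝ (Dg (x k))) N (L / 2) hfdef
      (fun p => hsmooth p (x k)) (hmin k)
  have hmono : Antitone (f ∘ x) := antitone_nat_of_succ_le fun k => by simpa using hstep k (x k)
  obtain ⟨F, hF⟩ : ∃ F : ℕ → ℝ, ∀ k, f (x k) = F k := ⟨fun k => (f (x k)).toReal, fun k =>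
    (EReal.coe_toReal (ne_top_of_le_ne_top h0 (hmono k.zero_le))
      (ne_bot_of_le_ne_bot (hfstar ▸ EReal.coe_ne_bot fstar) (hstar _))).symm⟩
  have hgap : ∀ k, 0 ≤ F k - fstar := fun k => by
    have := hstar (x k)
    rw [hfstar, hF k, EReal.coe_le_coe_iff] at this
    linarith
  have hrec : GapRecurrence (2 * L * D ^ 2) fun k => F k - fstar := fun k τ hτ0 hτ1 => by
    have := le_convex_combination_add_of_step N (by positivity) hf_convex (hF k) hfstar
      (hdiam xstar (x k) (by simp [hfstar]) (by simp [hF k])) (hstep k) hτ0 hτ1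
    rw [hF, EReal.coe_le_coe_iff] at this
    linarith
  have := hrec.le_max hgap hK
  rw [hF K, hF 0, ← EReal.coe_sub, ← EReal.coe_sub, ← EReal.coe_mul,
    ← EReal.coe_strictMono.monotone.map_max]
  exact EReal.coe_le_coe_iff.2 this

/-- (Non-Euclidean composite gradient descent, convergence.)
Under the setup of the progress lemma, with iterates
`x (K+1) = argmin_p ( ⟨Dg (x K), p⟩ + (L/2)·N(p − x K)² + ψ p )`, if additionally `f`
is finite only on a region of diameter `D` in the norm `N`, then for all `K ≥ 1`:
`ε_K ≤ max( 2LD² / (⌊(K−1)/2⌋ + 4), (1/2)^⌊(K−1)/2⌋ · ε₀ )`,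
where `ε_K = f (x K) − min f`. -/
theorem stmt14 {m : ℕ} (N : Seminorm ℝ (Fin m → ℝ)) (hN : ∀ p, N p = 0 → p = 0)
    (L : ℝ) (hL : 0 < L) (D : ℝ) (hD : 0 ≤ D)
    (g : (Fin m → ℝ) → ℝ) (Dg : (Fin m → ℝ) → (Fin m → ℝ))
    (ψ : (Fin m → ℝ) → EReal) (hψ : ∀ p, ψ p ≠ ⊥)
    (f : (Fin m → ℝ) → EReal) (hfdef : ∀ p, f p = (g p : EReal) + ψ p)
    (hg_convex : ConvexOn ℝ Set.univ g)
    (hsmooth : ∀ p q, g p ≤ g q + (∑ i, Dg q i * (p i - q i)) + L / 2 * (N (p - q)) ^ 2)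
    (hf_convex : ∀ p q, ∀ τ : ℝ, 0 ≤ τ → τ ≤ 1 →
      f (τ • p + (1 - τ) • q) ≤ ((τ : EReal) * f p + ((1 - τ : ℝ) : EReal) * f q))
    (hdiam : ∀ p q, f p ≠ ⊤ → f q ≠ ⊤ → N (p - q) ≤ D)
    (x : ℕ → Fin m → ℝ)
    (hmin : ∀ (K : ℕ) (p : Fin m → ℝ),
      (((∑ i, Dg (x K) i * x (K + 1) i) + L / 2 * (N (x (K + 1) - x K)) ^ 2 : ℝ) : EReal)
          + ψ (x (K + 1)) ≤
      (((∑ i, Dg (x K) i * p i) + L / 2 * (N (p - x K)) ^ 2 : ℝ) : EReal) + ψ p)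
    (xstar : Fin m → ℝ) (hstar : ∀ p, f xstar ≤ f p)
    (fstar : ℝ) (hfstar : f xstar = (fstar : EReal)) :
    ∀ K : ℕ, 1 ≤ K →
      f (x K) - (fstar : EReal) ≤
        max ((2 * L * D ^ 2 / ((((K - 1) / 2 : ℕ) : ℝ) + 4) : ℝ) : EReal)
          ((((1 / 2 : ℝ) ^ ((K - 1) / 2 : ℕ) : ℝ) : EReal) * (f (x 0) - (fstar : EReal))) :=
  stmt14_general N L hL D g Dg ψ f hfdef hg_convex hsmooth hf_convex hdiam x hmin xstar hstar fstar
    hfstar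
end
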